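/- (Exact bias decomposition under random signs.) Let n, p ≥ 1, λ > 0, Σ = VΛVᵀ a p×p symmetric positive-definite matrix with eigenvalues λᵢ > 0 and orthonormal eigenvector matrix V = [v₁,…,v_p], X ∈ ℝ^{n×p}, zᵢ = Xvᵢ/√λᵢ, A_{−i} = XXᵀ − λᵢzᵢzᵢᵀ, and M = (XXᵀ + nλI)^{-1}. Let t ∈ ℝ^p be fixed, let s be a random vector of independent uniform ±1 signs, and set θ = V(s ⊙ t). Then: (i) E_s[θᵀ(I − XᵀMX)Σ(I − XᵀMX)θ] = Σ_{i=1}^p tᵢ²·[λᵢ(1 − λᵢzᵢᵀMzᵢ)² + Σ_{j≠i} λᵢλⱼ²(zᵢᵀMzⱼ)²]; and (ii) for every i, 1 − λᵢzᵢᵀMzᵢ = 1/(1 + λᵢzᵢᵀ(A_{−i} + nλI)^{-1}zᵢ), so in particular E_s[θᵀ(I − XᵀMX)Σ(I − XᵀMX)θ] ≥ Σᵢ tᵢ²λᵢ/(1 + λᵢzᵢᵀ(A_{−i} + nλI)^{-1}zᵢ)². -/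

import Mathlib

open Matrix

noncomputable section

variable {n p : ℕ}

/-- `zᵢ = X vᵢ / √λᵢ`. -/
def zvec (lam : Fin p → ℝ) (v : Fin p → Fin p → ℝ) (X : Matrix (Fin n) (Fin p) ℝ)
    (i : Fin p) : Fin n → ℝ :=
  (Real.sqrt (lam i))⁻¹ • X.mulVec (v i)

/-- `A₋ᵢ = X Xᵀ − λᵢ zᵢ zᵢᵀ`. -/
def Ami (lam : Fin p → ℝ) (v : Fin p → Fin p → ℝ) (X : Matrix (Fin n) (Fin p) ℝ)
    (i : Fin p) : Matrix (Fin n) (Fin n) ℝ :=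
  X * Xᵀ - lam i • vecMulVec (zvec lam v X i) (zvec lam v X i)

/-- `B ↦ B + n λ I`. -/
def addReg (lamreg : ℝ) (B : Matrix (Fin n) (Fin n) ℝ) : Matrix (Fin n) (Fin n) ℝ :=
  B + ((n : ℝ) * lamreg) • (1 : Matrix (Fin n) (Fin n) ℝ)

/-- a ±1 sign from a boolean -/
def sgn (b : Bool) : ℝ := if b then 1 else -1

/-!
Write `θ = V c` with `c = s ⊙ t`. The bias is the quadratic form `cᵀ R c` with
`R = ((I - XᵀMX) V)ᵀ Σ ((I - XᵀMX) V)`, and averaging over the signs kills every off-diagonal term,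
leaving `∑ᵢ tᵢ² Rᵢᵢ`. Expanding `Σ = ∑ⱼ λⱼ vⱼ vⱼᵀ` gives `Rᵢᵢ = ∑ⱼ λⱼ (vⱼᵀ (I - XᵀMX) vᵢ)²`, and
`vⱼᵀ (I - XᵀMX) vᵢ = δᵢⱼ - √(λᵢ λⱼ) zⱼᵀ M zᵢ` because `X vᵢ = √λᵢ zᵢ`.
Part (ii) is the Sherman–Morrison formula for the rank-one update
`XXᵀ + nλI = (A₋ᵢ + nλI) + λᵢ zᵢ zᵢᵀ`, where `A₋ᵢ = ∑_{j ≠ i} λⱼ zⱼ zⱼᵀ` is positive semidefinite;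
the lower bound then drops the nonnegative cross terms `j ≠ i` of (i).
-/

lemma sgn_mul_self (b : Bool) : sgn b * sgn b = 1 := by cases b <;> simp [sgn]

lemma sgn_not (b : Bool) : sgn (!b) = -sgn b := by cases b <;> simp [sgn]

section SignAverage

variable {ι : Type*} [Fintype ι] [DecidableEq ι]

lemma sum_sgn_mul_sgn (j k : ι) :
    ∑ s : ι → Bool, sgn (s j) * sgn (s k) = if j = k then (2 : ℝ) ^ Fintype.card ι else 0 := by
  split_ifs with hjk
  · subst hjk
    simp [sgn_mul_self]
  · -- flipping the sign `s j` pairs off the terms with opposite values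
    refine Finset.sum_involution (fun s _ => Function.update s j (!s j))
      (fun s _ => by rw [Function.update_of_ne (Ne.symm hjk), Function.update_self, sgn_not]; ring)
      (fun s _ _ hs => by simpa using congrFun hs j) (fun _ _ => Finset.mem_univ _)
      (fun s _ => by simp)

lemma sum_sgn_dotProduct_mulVec (R : Matrix ι ι ℝ) (t : ι → ℝ) :
    ∑ s : ι → Bool, (fun j => sgn (s j) * t j) ⬝ᵥ R *ᵥ (fun j => sgn (s j) * t j) =
      2 ^ Fintype.card ι * ∑ i, t i ^ 2 * R i i := by
  calc _ = ∑ j, ∑ k, t j * R j k * t k * ∑ s : ι → Bool, sgn (s j) * sgn (s k) := by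
        simp only [dotProduct, mulVec, Finset.mul_sum]
        rw [Finset.sum_comm]
        refine Finset.sum_congr rfl fun j _ => ?_
        rw [Finset.sum_comm]
        exact Finset.sum_congr rfl fun k _ => Finset.sum_congr rfl fun s _ => by ring
    _ = _ := by simp [sum_sgn_mul_sgn, Finset.mul_sum, pow_two, mul_comm, mul_left_comm]

end SignAverage

section QuadraticForms

variable {R : Type*} [CommRing R] {l m : Type*}

lemma dotProduct_transpose_mul_mul_mulVec [Fintype l] [Fintype m] (X : Matrix m l R)
    (M : Matrix m m R) (u w : l → R) :
    u ⬝ᵥ (Xᵀ * M * X) *ᵥ w = (X *ᵥ u) ⬝ᵥ M *ᵥ (X *ᵥ w) := by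
  rw [← mulVec_mulVec, ← mulVec_mulVec, dotProduct_mulVec u, vecMul_transpose]

lemma transpose_mul_mul_apply_self [Fintype m] (A : Matrix m l R) (S : Matrix m m R) (i : l) :
    (Aᵀ * S * A) i i = (fun k => A k i) ⬝ᵥ S *ᵥ (fun k => A k i) := by
  simp only [mul_apply, transpose_apply, dotProduct, mulVec, Finset.sum_mul, Finset.mul_sum]
  rw [Finset.sum_comm]
  exact Finset.sum_congr rfl fun a _ => Finset.sum_congr rfl fun b _ => by ring

lemma dotProduct_sum_smul_vecMulVec_mulVec [Fintype m] {ι : Type*} [Fintype ι] (a : ι → R)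
    (v : ι → m → R) (w : m → R) :
    w ⬝ᵥ (∑ j, a j • vecMulVec (v j) (v j)) *ᵥ w = ∑ j, a j * (v j ⬝ᵥ w) ^ 2 := by
  rw [sum_mulVec, dotProduct_sum]
  refine Finset.sum_congr rfl fun j _ => ?_
  rw [smul_mulVec, vecMulVec_mulVec, op_smul_eq_smul, dotProduct_smul, dotProduct_smul,
    smul_eq_mul, smul_eq_mul, dotProduct_comm w]
  ring

lemma mul_transpose_eq_sum_vecMulVec [Fintype l] (A : Matrix m l R) :
    A * Aᵀ = ∑ j, vecMulVec (fun a => A a j) (fun a => A a j) := by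
  ext a b
  simp [mul_apply, Matrix.sum_apply, vecMulVec_apply]

lemma Matrix.IsSymm.dotProduct_mulVec_comm [Fintype m] {M : Matrix m m R} (hM : M.IsSymm)
    (u w : m → R) :
    u ⬝ᵥ M *ᵥ w = w ⬝ᵥ M *ᵥ u := by
  rw [dotProduct_mulVec, ← mulVec_transpose, hM.eq, dotProduct_comm]

end QuadraticForms

lemma one_sub_mul_dotProduct_inv_add_smul_vecMulVec_mulVec {K m : Type*} [Field K] [Fintype m]
    [DecidableEq m] {A : Matrix m m K} {c : K} {u : m → K} (hA : IsUnit A)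
    (hB : IsUnit (A + c • vecMulVec u u)) :
    1 - c * (u ⬝ᵥ (A + c • vecMulVec u u)⁻¹ *ᵥ u) = (1 + c * (u ⬝ᵥ A⁻¹ *ᵥ u))⁻¹ := by
  set B := A + c • vecMulVec u u
  set q := u ⬝ᵥ A⁻¹ *ᵥ u
  have hAinv : A * A⁻¹ = 1 := mul_nonsing_inv A ((isUnit_iff_isUnit_det A).mp hA)
  have hBinv : B⁻¹ * B = 1 := nonsing_inv_mul B ((isUnit_iff_isUnit_det B).mp hB)
  have hB_Ainv_u : B *ᵥ (A⁻¹ *ᵥ u) = (1 + c * q) • u := by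
    rw [add_mulVec, mulVec_mulVec, hAinv, one_mulVec, smul_mulVec, vecMulVec_mulVec,
      op_smul_eq_smul, smul_smul, add_smul, one_smul]
  have hq : 1 + c * q ≠ 0 := by
    intro h0
    have hAinv_u : A⁻¹ *ᵥ u = 0 :=
      mulVec_injective_of_isUnit hB (by rw [hB_Ainv_u, h0, zero_smul, mulVec_zero])
    have hu : u = 0 := by
      rw [← one_mulVec u, ← hAinv, ← mulVec_mulVec, hAinv_u, mulVec_zero]
    simp [q, hu] at h0
  have hBinv_u : B⁻¹ *ᵥ u = (1 + c * q)⁻¹ • A⁻¹ *ᵥ u := by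
    calc B⁻¹ *ᵥ u = B⁻¹ *ᵥ ((1 + c * q)⁻¹ • B *ᵥ (A⁻¹ *ᵥ u)) := by
          rw [hB_Ainv_u, smul_smul, inv_mul_cancel₀ hq, one_smul]
      _ = _ := by rw [mulVec_smul, mulVec_mulVec, hBinv, one_mulVec]
  rw [hBinv_u, dotProduct_smul, smul_eq_mul]
  field_simp
  ring

lemma addReg_posDef {lamreg : ℝ} (hlamreg : 0 < lamreg) {B : Matrix (Fin n) (Fin n) ℝ}
    (hB : B.PosSemidef) : (addReg lamreg B).PosDef := by
  rcases n.eq_zero_or_pos with rfl | hn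
  · exact Subsingleton.elim (1 : Matrix (Fin 0) (Fin 0) ℝ) (addReg lamreg B) ▸ PosDef.one
  · exact PosDef.posSemidef_add hB (PosDef.one.smul (by positivity))

section RidgeSetting

variable {lam : Fin p → ℝ} (X : Matrix (Fin n) (Fin p) ℝ)

lemma sqrt_smul_zvec (v : Fin p → Fin p → ℝ) {i : Fin p} (hi : 0 < lam i) :
    √(lam i) • zvec lam v X i = X *ᵥ v i := by
  rw [zvec, smul_smul, mul_inv_cancel₀ (Real.sqrt_pos.mpr hi).ne', one_smul]

lemma smul_vecMulVec_zvec (v : Fin p → Fin p → ℝ) {i : Fin p} (hi : 0 < lam i) :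
    lam i • vecMulVec (zvec lam v X i) (zvec lam v X i) = vecMulVec (X *ᵥ v i) (X *ᵥ v i) := by
  rw [← sqrt_smul_zvec X v hi, smul_vecMulVec, vecMulVec_smul, smul_smul,
    Real.mul_self_sqrt hi.le]

lemma addReg_eq_addReg_Ami_add (lamreg : ℝ) (v : Fin p → Fin p → ℝ) (i : Fin p) :
    addReg lamreg (X * Xᵀ) =
      addReg lamreg (Ami lam v X i) + lam i • vecMulVec (zvec lam v X i) (zvec lam v X i) := by
  simp only [addReg, Ami]
  abel

lemma addReg_mul_transpose_posDef {lamreg : ℝ} (hlamreg : 0 < lamreg) :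
    (addReg lamreg (X * Xᵀ)).PosDef :=
  addReg_posDef hlamreg <| by
    simpa [conjTranspose_eq_transpose_of_trivial] using posSemidef_self_mul_conjTranspose X

variable (hlam : ∀ i, 0 < lam i) {V : Matrix (Fin p) (Fin p) ℝ} (hV : Vᵀ * V = 1)
include hlam hV

lemma mul_transpose_eq_sum_smul_vecMulVec_zvec :
    X * Xᵀ = ∑ j, lam j •
      vecMulVec (zvec lam (fun i j => V j i) X j) (zvec lam (fun i j => V j i) X j) := by
  have hVVt : V * Vᵀ = 1 := mul_eq_one_comm.mp hV
  calc X * Xᵀ = (X * V) * (X * V)ᵀ := by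
        rw [transpose_mul, Matrix.mul_assoc, ← Matrix.mul_assoc V, hVVt, Matrix.one_mul]
    _ = ∑ j, vecMulVec (X *ᵥ fun k => V k j) (X *ᵥ fun k => V k j) :=
        mul_transpose_eq_sum_vecMulVec _
    _ = _ := Finset.sum_congr rfl fun j _ =>
        (smul_vecMulVec_zvec X (fun i j => V j i) (hlam j)).symm

lemma posSemidef_Ami (i : Fin p) : (Ami lam (fun i j => V j i) X i).PosSemidef := by
  rw [Ami, mul_transpose_eq_sum_smul_vecMulVec_zvec X hlam hV,
    ← Finset.add_sum_erase _ _ (Finset.mem_univ i), add_sub_cancel_left]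
  exact posSemidef_sum _ fun j _ => by
    simpa using (posSemidef_vecMulVec_self_star (zvec lam (fun i j => V j i) X j)).smul (hlam j).le

lemma one_sub_mul_dotProduct_zvec_eq_inv {lamreg : ℝ} (hlamreg : 0 < lamreg) (i : Fin p) :
    1 - lam i * (zvec lam (fun i j => V j i) X i ⬝ᵥ
        (addReg lamreg (X * Xᵀ))⁻¹ *ᵥ zvec lam (fun i j => V j i) X i) =
      (1 + lam i * (zvec lam (fun i j => V j i) X i ⬝ᵥ
        (addReg lamreg (Ami lam (fun i j => V j i) X i))⁻¹ *ᵥ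
          zvec lam (fun i j => V j i) X i))⁻¹ := by
  have hB := (addReg_mul_transpose_posDef X hlamreg).isUnit
  rw [addReg_eq_addReg_Ami_add X lamreg (fun i j => V j i) i] at hB ⊢
  exact one_sub_mul_dotProduct_inv_add_smul_vecMulVec_mulVec
    (addReg_posDef hlamreg (posSemidef_Ami X hlam hV i)).isUnit hB

lemma dotProduct_col_one_sub_mulVec_col (M : Matrix (Fin n) (Fin n) ℝ) (i j : Fin p) :
    (fun k => V k j) ⬝ᵥ (1 - Xᵀ * M * X) *ᵥ (fun k => V k i) =
      (if j = i then 1 else 0) - √(lam j) * √(lam i) *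
        (zvec lam (fun i j => V j i) X j ⬝ᵥ M *ᵥ zvec lam (fun i j => V j i) X i) := by
  rw [sub_mulVec, one_mulVec, dotProduct_sub, dotProduct_transpose_mul_mul_mulVec,
    ← sqrt_smul_zvec X (fun i j => V j i) (hlam j), ← sqrt_smul_zvec X (fun i j => V j i) (hlam i),
    mulVec_smul, dotProduct_smul, smul_dotProduct, smul_eq_mul, smul_eq_mul]
  congr 1
  · simpa [mul_apply, dotProduct, one_apply] using congrFun (congrFun hV j) i
  · ring

lemma bias_matrix_apply_self {M : Matrix (Fin n) (Fin n) ℝ} (hM : M.IsSymm) (i : Fin p) :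
    (((1 - Xᵀ * M * X) * V)ᵀ * (∑ i, lam i • vecMulVec (fun j => V j i) (fun j => V j i)) *
        ((1 - Xᵀ * M * X) * V) : Matrix (Fin p) (Fin p) ℝ) i i =
      lam i * (1 - lam i * (zvec lam (fun i j => V j i) X i ⬝ᵥ
          M *ᵥ zvec lam (fun i j => V j i) X i)) ^ 2 +
        ∑ j, if j ≠ i then lam i * lam j ^ 2 * (zvec lam (fun i j => V j i) X i ⬝ᵥ
          M *ᵥ zvec lam (fun i j => V j i) X j) ^ 2 else 0 := by
  have hcol : (fun k => ((1 - Xᵀ * M * X) * V : Matrix (Fin p) (Fin p) ℝ) k i) =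
      (1 - Xᵀ * M * X) *ᵥ fun k => V k i := rfl
  rw [transpose_mul_mul_apply_self, hcol, dotProduct_sum_smul_vecMulVec_mulVec,
    ← Finset.add_sum_erase _ _ (Finset.mem_univ i), ← Finset.sum_filter, Finset.filter_ne']
  simp only [dotProduct_col_one_sub_mulVec_col X hlam hV]
  congr 1
  · rw [if_true, Real.mul_self_sqrt (hlam i).le]
  · refine Finset.sum_congr rfl fun j hj => ?_
    rw [if_neg (Finset.ne_of_mem_erase hj),
      hM.dotProduct_mulVec_comm (zvec lam (fun i j => V j i) X j), zero_sub, neg_sq, mul_pow, mul_pow,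
      Real.sq_sqrt (hlam i).le, Real.sq_sqrt (hlam j).le]
    ring

lemma sign_average_bias_eq {M : Matrix (Fin n) (Fin n) ℝ} (hM : M.IsSymm) (t : Fin p → ℝ) :
    ((2 : ℝ) ^ p)⁻¹ * ∑ s : Fin p → Bool,
      (V *ᵥ (fun j => sgn (s j) * t j) - (Xᵀ * M * X) *ᵥ (V *ᵥ fun j => sgn (s j) * t j)) ⬝ᵥ
        (∑ i, lam i • vecMulVec (fun j => V j i) (fun j => V j i)) *ᵥ
          (V *ᵥ (fun j => sgn (s j) * t j) - (Xᵀ * M * X) *ᵥ (V *ᵥ fun j => sgn (s j) * t j)) =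
      ∑ i, t i ^ 2 *
        (lam i * (1 - lam i * (zvec lam (fun i j => V j i) X i ⬝ᵥ
            M *ᵥ zvec lam (fun i j => V j i) X i)) ^ 2 +
          ∑ j, if j ≠ i then lam i * lam j ^ 2 * (zvec lam (fun i j => V j i) X i ⬝ᵥ
            M *ᵥ zvec lam (fun i j => V j i) X j) ^ 2 else 0) := by
  have hθ (c : Fin p → ℝ) : V *ᵥ c - (Xᵀ * M * X) *ᵥ (V *ᵥ c) = ((1 - Xᵀ * M * X) * V) *ᵥ c := by
    simp only [← mulVec_mulVec, sub_mulVec, one_mulVec]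
  simp only [hθ, ← dotProduct_transpose_mul_mul_mulVec, sum_sgn_dotProduct_mulVec, Fintype.card_fin,
    bias_matrix_apply_self X hlam hV hM]
  rw [inv_mul_cancel_left₀ (by positivity)]

end RidgeSetting

/-- exact bias decomposition under random signs: with
`M = (XXᵀ + nλI)⁻¹`, `θ = V (s ⊙ t)` for independent uniform signs `s`, and
`Σ = V Λ Vᵀ`:
(i) `E_s[θᵀ(I − XᵀMX) Σ (I − XᵀMX)θ]
      = Σᵢ tᵢ² (λᵢ(1 − λᵢ zᵢᵀ M zᵢ)² + Σ_{j≠i} λᵢ λⱼ² (zᵢᵀ M zⱼ)²)`,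
(ii) `1 − λᵢ zᵢᵀ M zᵢ = 1/(1 + λᵢ zᵢᵀ (A₋ᵢ + nλI)⁻¹ zᵢ)`, and consequently
(iii) `E_s[⋯] ≥ Σᵢ tᵢ² λᵢ / (1 + λᵢ zᵢᵀ (A₋ᵢ + nλI)⁻¹ zᵢ)²`. -/
theorem statement17 (lamreg : ℝ) (hlam : 0 < lamreg)
    (lam : Fin p → ℝ) (hlampos : ∀ i, 0 < lam i)
    (V : Matrix (Fin p) (Fin p) ℝ) (hV : Vᵀ * V = 1)
    (X : Matrix (Fin n) (Fin p) ℝ) (t : Fin p → ℝ) :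
    -- abbreviations
    (fun (v : Fin p → Fin p → ℝ) (Sig : Matrix (Fin p) (Fin p) ℝ)
        (Mreg : Matrix (Fin n) (Fin n) ℝ)
        (z : Fin p → Fin n → ℝ) (quad : (Fin p → ℝ) → ℝ) =>
      ((2 : ℝ) ^ p)⁻¹ *
          (∑ sb : Fin p → Bool, quad (V.mulVec (fun j => sgn (sb j) * t j))) =
        (∑ i : Fin p, t i ^ 2 *
          (lam i * (1 - lam i * (z i ⬝ᵥ Mreg.mulVec (z i))) ^ 2 +
            ∑ j : Fin p, if j ≠ i then
              lam i * lam j ^ 2 * (z i ⬝ᵥ Mreg.mulVec (z j)) ^ 2 else 0)) ∧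
      (∀ i : Fin p, 1 - lam i * (z i ⬝ᵥ Mreg.mulVec (z i)) =
        (1 + lam i * (z i ⬝ᵥ (addReg lamreg (Ami lam v X i))⁻¹.mulVec (z i)))⁻¹) ∧
      (∑ i : Fin p, t i ^ 2 * lam i /
          (1 + lam i * (z i ⬝ᵥ (addReg lamreg (Ami lam v X i))⁻¹.mulVec (z i))) ^ 2) ≤
        ((2 : ℝ) ^ p)⁻¹ *
          (∑ sb : Fin p → Bool, quad (V.mulVec (fun j => sgn (sb j) * t j))))
      -- instantiations of the abbreviations
      (fun i j => V j i)
      (∑ i, lam i • vecMulVec (fun j => V j i) (fun j => V j i))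
      ((addReg lamreg (X * Xᵀ))⁻¹)
      (zvec lam (fun i j => V j i) X)
      (fun θv =>
        (θv - (Xᵀ * (addReg lamreg (X * Xᵀ))⁻¹ * X).mulVec θv) ⬝ᵥ
          (∑ i, lam i • vecMulVec (fun j => V j i) (fun j => V j i)).mulVec
            (θv - (Xᵀ * (addReg lamreg (X * Xᵀ))⁻¹ * X).mulVec θv)) := by
  beta_reduce
  have hM : ((addReg lamreg (X * Xᵀ))⁻¹).IsSymm := by
    simpa using (addReg_mul_transpose_posDef X hlam).inv.isHermitian
  have hbias := sign_average_bias_eq X hlampos hV hM t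
  have hsherman := one_sub_mul_dotProduct_zvec_eq_inv X hlampos hV hlam
  refine ⟨hbias, hsherman, hbias ▸ Finset.sum_le_sum fun i _ => ?_⟩
  rw [div_eq_mul_inv, ← inv_pow, ← hsherman i, mul_assoc]
  refine mul_le_mul_of_nonneg_left (le_add_of_nonneg_right ?_) (sq_nonneg _)
  have := hlampos i
  exact Finset.sum_nonneg fun j _ => ite_nonneg (by positivity) le_rfl
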